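/- Let (a_n)_{n≥0} be a sequence of nonzero complex numbers satisfying |a_0| ≥ |a_1| ≥ |a_2| ≥ ⋯ and ∑_{n=0}^∞ |a_n|² < ∞, let T be the corresponding weighted shift, and let H_1 denote the closed linear span of {e_n : n ≥ 1} in H. Then the map F : J ↦ {S e_0 : S ∈ J} is an inclusion-preserving bijection (a lattice isomorphism) from the set of closed two-sided ideals of A_T onto the set of closed T-invariant subspaces of H_1: for every closed ideal J of A_T the set {S e_0 : S ∈ J} is a closed T-invariant subspace of H_1, every closed T-invariant subspace of H_1 arises this way, distinct closed ideals have distinct images, and J_1 ⊆ J_2 if and only if F(J_1) ⊆ F(J_2). -/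

import Mathlib

/-!
For `S = ∑ cₙ T^(n+1)` one has `S eₖ = ∑ cₙ aₖ ⋯ a_{k+n} e_{k+n+1}`, and since the weights
decrease, `aₖ ⋯ a_{k+n}` is at most `|aₖ| / |a₀|` times `a₀ ⋯ aₙ` in modulus; hence
`‖S eₖ‖ ≤ (|aₖ| / |a₀|) ‖S e₀‖`, and Cauchy–Schwarz against `(aₖ) ∈ ℓ²` gives
`‖S‖ ≤ C ‖S e₀‖`. By density this bound holds on all of `A_T`, so `S ↦ S e₀` is injective on
`A_T` with closed range, and the range is `H₁` because it contains `eₙ = (a₀ ⋯ a_{n-1})⁻¹ Tⁿ e₀`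
for `n ≥ 1`. The inverse of `F` is `K ↦ {S ∈ A_T | S e₀ ∈ K}`, a two-sided ideal because `A_T`
is commutative and leaves every closed `T`-invariant subspace invariant.
-/

noncomputable section

/-- `H = ℓ²(ℕ)` over `ℂ`. -/
abbrev H : Type := lp (fun _ : ℕ => ℂ) 2

/-- The standard orthonormal basis of `ℓ²(ℕ)`. -/
def e (n : ℕ) : H := lp.single 2 n 1

/-- `A_T`: the operator-norm closure of the polynomials in `T` with zero constant term. -/
def polyAlg (T : H →L[ℂ] H) : Set (H →L[ℂ] H) :=
  closure ((NonUnitalAlgebra.adjoin ℂ {T} : NonUnitalSubalgebra ℂ (H →L[ℂ] H)) :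
    Set (H →L[ℂ] H))

/-- A closed two-sided ideal of the (non-unital) operator algebra `A_T`. -/
def IsClosedIdeal (T : H →L[ℂ] H) (J : Set (H →L[ℂ] H)) : Prop :=
  J ⊆ polyAlg T ∧ IsClosed J ∧ (0 : H →L[ℂ] H) ∈ J ∧
  (∀ x ∈ J, ∀ y ∈ J, x + y ∈ J) ∧
  (∀ c : ℂ, ∀ x ∈ J, c • x ∈ J) ∧
  (∀ a ∈ polyAlg T, ∀ x ∈ J, a * x ∈ J ∧ x * a ∈ J)

/-- `H₁`: the closed linear span of `{e_n : n ≥ 1}` in `H`. -/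
def H1 : Set H :=
  closure ((Submodule.span ℂ {x : H | ∃ n : ℕ, 1 ≤ n ∧ x = e n} : Submodule ℂ H) : Set H)

/-- A closed `T`-invariant subspace of `H₁`. -/
def IsInvSubspace (T : H →L[ℂ] H) (K : Set H) : Prop :=
  K ⊆ H1 ∧ IsClosed K ∧ (0 : H) ∈ K ∧
  (∀ x ∈ K, ∀ y ∈ K, x + y ∈ K) ∧
  (∀ c : ℂ, ∀ x ∈ K, c • x ∈ K) ∧
  (∀ x ∈ K, T x ∈ K)

/-- The map `F : J ↦ {S e₀ : S ∈ J}`. -/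
def Fmap (J : Set (H →L[ℂ] H)) : Set H := (fun S : H →L[ℂ] H => S (e 0)) '' J

lemma orthonormal_e : Orthonormal ℂ e := by
  rw [orthonormal_iff_ite]
  intro i j
  simp [e, lp.inner_single_left, lp.single_apply, Pi.single_apply]

lemma hasSum_e (f : H) : HasSum (fun n => f n • e n) f := by
  simpa [e, ← lp.single_smul] using lp.hasSum_single (by norm_num) f

lemma Orthonormal.norm_sum_smul_sq {ι 𝕜 E : Type*} [RCLike 𝕜] [NormedAddCommGroup E]
    [InnerProductSpace 𝕜 E] {v : ι → E} (hv : Orthonormal 𝕜 v) (s : Finset ι) (l : ι → 𝕜) :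
    ‖∑ i ∈ s, l i • v i‖ ^ 2 = ∑ i ∈ s, ‖l i‖ ^ 2 := by
  rw [norm_sq_eq_re_inner (𝕜 := 𝕜), hv.inner_sum l l s, map_sum]
  refine Finset.sum_congr rfl fun i _ => ?_
  rw [RCLike.conj_mul]
  norm_cast

lemma Orthonormal.norm_sum_smul_le {ι 𝕜 E : Type*} [RCLike 𝕜] [NormedAddCommGroup E]
    [InnerProductSpace 𝕜 E] {u v : ι → E} (hu : Orthonormal 𝕜 u) (hv : Orthonormal 𝕜 v)
    (s : Finset ι) {α β : ι → 𝕜} {r : ℝ} (hr : 0 ≤ r) (h : ∀ i ∈ s, ‖α i‖ ≤ r * ‖β i‖) :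
    ‖∑ i ∈ s, α i • u i‖ ≤ r * ‖∑ i ∈ s, β i • v i‖ := by
  rw [← pow_le_pow_iff_left₀ (norm_nonneg _) (by positivity) two_ne_zero, mul_pow,
    hu.norm_sum_smul_sq, hv.norm_sum_smul_sq, Finset.mul_sum]
  gcongr with i hi
  rw [← mul_pow]
  exact pow_le_pow_left₀ (norm_nonneg _) (h i hi) 2

lemma ContinuousLinearMap.opNorm_le_of_norm_apply_e_le {E : Type*} [NormedAddCommGroup E]
    [NormedSpace ℂ E] (S : H →L[ℂ] E) (b : H) {M : ℝ} (hM : 0 ≤ M)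
    (h : ∀ k, ‖S (e k)‖ ≤ ‖b k‖ * M) : ‖S‖ ≤ ‖b‖ * M := by
  refine S.opNorm_le_bound (by positivity) fun x => ?_
  have hpq : (2 : ENNReal).toReal.HolderConjugate (2 : ENNReal).toReal := by
    simpa using Real.HolderConjugate.two_two
  obtain ⟨hsummable, hcs⟩ := lp.tsum_mul_le_mul_norm hpq x b
  have hSx : HasSum (fun k => x k • S (e k)) (S x) := by
    simpa using (hasSum_e x).mapL S
  calc ‖S x‖ ≤ ∑' k, ‖x k‖ * ‖b k‖ * M :=
        hSx.norm_le_of_bounded (hsummable.mul_right M).hasSum fun k => by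
          rw [norm_smul, mul_assoc]; gcongr; exact h k
    _ = (∑' k, ‖x k‖ * ‖b k‖) * M := tsum_mul_right
    _ ≤ ‖x‖ * ‖b‖ * M := by gcongr
    _ = ‖b‖ * M * ‖x‖ := by ring

lemma Antitone.mul_prod_range_succ_add_le {b : ℕ → ℝ} (hb : Antitone b) (h0 : ∀ n, 0 ≤ b n)
    (k n : ℕ) :
    b 0 * ∏ i ∈ Finset.range (n + 1), b (k + i) ≤ b k * ∏ i ∈ Finset.range (n + 1), b i := by
  rw [Finset.prod_range_succ', Finset.prod_range_succ', add_zero]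
  calc b 0 * ((∏ i ∈ Finset.range n, b (k + (i + 1))) * b k)
      = b k * b 0 * ∏ i ∈ Finset.range n, b (k + (i + 1)) := by ring
    _ ≤ b k * b 0 * ∏ i ∈ Finset.range n, b (i + 1) := by
        gcongr with i
        · exact mul_nonneg (h0 k) (h0 0)
        · exact fun i _ => h0 _
        · exact hb (by omega)
    _ = b k * ((∏ i ∈ Finset.range n, b (i + 1)) * b 0) := by ring

lemma NonUnitalAlgebra.exists_finsupp_of_mem_adjoin_singleton {R A : Type*} [CommSemiring R]
    [Semiring A] [Algebra R A] {x y : A} (hy : y ∈ NonUnitalAlgebra.adjoin R {x}) :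
    ∃ c : ℕ →₀ R, y = c.sum fun n r => r • x ^ (n + 1) := by
  let powers : Subsemigroup A :=
    { carrier := Set.range fun n : ℕ => x ^ (n + 1)
      mul_mem' := by
        rintro _ _ ⟨m, rfl⟩ ⟨n, rfl⟩
        exact ⟨m + n + 1, by rw [← pow_add]; ring_nf⟩ }
  have hle : Subsemigroup.closure {x} ≤ powers :=
    Subsemigroup.closure_le.2 (Set.singleton_subset_iff.2 ⟨0, pow_one x⟩)
  rw [← SetLike.mem_coe, ← NonUnitalSubalgebra.coe_toSubmodule,
    NonUnitalAlgebra.adjoin_eq_span] at hy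
  obtain ⟨c, hc⟩ := Finsupp.mem_span_range_iff_exists_finsupp.1 (Submodule.span_mono hle hy)
  exact ⟨c, hc.symm⟩

lemma NonUnitalAlgebra.pow_succ_mem_adjoin_singleton {R A : Type*} [CommSemiring R] [Semiring A]
    [Algebra R A] (x : A) (n : ℕ) : x ^ (n + 1) ∈ NonUnitalAlgebra.adjoin R {x} := by
  induction n with
  | zero => simp [NonUnitalAlgebra.self_mem_adjoin_singleton]
  | succ n ih => exact pow_succ x (n + 1) ▸ mul_mem ih (self_mem_adjoin_singleton R x)

section WeightedShift

variable {a : ℕ → ℂ} {T : H →L[ℂ] H} {C : ℝ}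

lemma pow_apply_e (hT : ∀ n, T (e n) = a n • e (n + 1)) (n k : ℕ) :
    (T ^ n) (e k) = (∏ i ∈ Finset.range n, a (k + i)) • e (k + n) := by
  induction n with
  | zero => simp
  | succ n ih =>
    rw [pow_succ', mul_apply_eq_comp, ih, map_smul, hT, smul_smul, Finset.prod_range_succ]
    rfl

lemma finsupp_sum_pow_succ_apply_e (hT : ∀ n, T (e n) = a n • e (n + 1)) (c : ℕ →₀ ℂ) (k : ℕ) :
    (c.sum fun n z => z • T ^ (n + 1)) (e k) =
      ∑ n ∈ c.support, (c n * ∏ i ∈ Finset.range (n + 1), a (k + i)) • e (k + (n + 1)) := by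
  simp [Finsupp.sum, pow_apply_e hT, smul_smul]

lemma norm_apply_e_le_of_mem_adjoin (ha0 : a 0 ≠ 0)
    (hdec : ∀ n, ‖a (n + 1)‖ ≤ ‖a n‖) (hT : ∀ n, T (e n) = a n • e (n + 1))
    {S : H →L[ℂ] H} (hS : S ∈ NonUnitalAlgebra.adjoin ℂ {T}) (k : ℕ) :
    ‖S (e k)‖ ≤ ‖a k‖ / ‖a 0‖ * ‖S (e 0)‖ := by
  obtain ⟨c, rfl⟩ := NonUnitalAlgebra.exists_finsupp_of_mem_adjoin_singleton hS
  have hortho (k : ℕ) : Orthonormal ℂ fun n => e (k + (n + 1)) :=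
    orthonormal_e.comp _ fun m n h => by omega
  rw [finsupp_sum_pow_succ_apply_e hT, finsupp_sum_pow_succ_apply_e hT]
  refine (hortho k).norm_sum_smul_le (hortho 0) _ (by positivity) fun n _ => ?_
  have hprod := (antitone_nat_of_succ_le hdec).mul_prod_range_succ_add_le
    (fun n => norm_nonneg _) k n
  simp only [zero_add] at hprod ⊢
  rw [norm_mul, norm_mul, norm_prod, norm_prod, div_mul_eq_mul_div,
    le_div_iff₀ (norm_pos_iff.2 ha0)]
  calc (‖c n‖ * ∏ i ∈ Finset.range (n + 1), ‖a (k + i)‖) * ‖a 0‖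
      = ‖c n‖ * (‖a 0‖ * ∏ i ∈ Finset.range (n + 1), ‖a (k + i)‖) := by ring
    _ ≤ ‖c n‖ * (‖a k‖ * ∏ i ∈ Finset.range (n + 1), ‖a i‖) := by gcongr
    _ = ‖a k‖ * (‖c n‖ * ∏ i ∈ Finset.range (n + 1), ‖a i‖) := by ring

lemma exists_norm_le_mul_norm_apply_e_zero (ha0 : a 0 ≠ 0)
    (hdec : ∀ n, ‖a (n + 1)‖ ≤ ‖a n‖) (hsum : Summable fun n => ‖a n‖ ^ 2)
    (hT : ∀ n, T (e n) = a n • e (n + 1)) :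
    ∃ C, ∀ S ∈ polyAlg T, ‖S‖ ≤ C * ‖S (e 0)‖ := by
  let b : H := ⟨a, memℓp_gen (by simpa using hsum)⟩
  have hclosed : IsClosed {S : H →L[ℂ] H | ‖S‖ ≤ ‖b‖ / ‖a 0‖ * ‖S (e 0)‖} :=
    isClosed_le continuous_norm
      (continuous_const.mul ((ContinuousLinearMap.apply ℂ H (e 0)).continuous.norm))
  refine ⟨‖b‖ / ‖a 0‖, fun S hS => closure_minimal (fun S hS => ?_) hclosed hS⟩
  calc ‖S‖ ≤ ‖b‖ * (‖S (e 0)‖ / ‖a 0‖) :=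
        S.opNorm_le_of_norm_apply_e_le b (by positivity) fun k => by
          rw [mul_div, ← div_mul_eq_mul_div]
          exact norm_apply_e_le_of_mem_adjoin ha0 hdec hT hS k
    _ = ‖b‖ / ‖a 0‖ * ‖S (e 0)‖ := by ring

lemma mem_polyAlg_iff {S : H →L[ℂ] H} : S ∈ polyAlg T ↔ S ∈ NonUnitalAlgebra.elemental ℂ T :=
  Iff.rfl

lemma mul_comm_of_mem_polyAlg {S S' : H →L[ℂ] H} (hS : S ∈ polyAlg T) (hS' : S' ∈ polyAlg T) :
    S * S' = S' * S :=
  congrArg Subtype.val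
    (mul_comm (⟨S, hS⟩ : NonUnitalAlgebra.elemental ℂ T) ⟨S', hS'⟩)

lemma eq_of_apply_e_zero_eq (hC : ∀ S ∈ polyAlg T, ‖S‖ ≤ C * ‖S (e 0)‖)
    {S S' : H →L[ℂ] H} (hS : S ∈ polyAlg T) (hS' : S' ∈ polyAlg T)
    (h : S (e 0) = S' (e 0)) : S = S' := by
  have := hC (S - S') (sub_mem (mem_polyAlg_iff.1 hS) hS')
  rw [sub_apply, h, sub_self, norm_zero, mul_zero] at this
  exact sub_eq_zero.1 (norm_le_zero_iff.1 this)

lemma isClosed_Fmap (hC : ∀ S ∈ polyAlg T, ‖S‖ ≤ C * ‖S (e 0)‖)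
    {J : Set (H →L[ℂ] H)} (hJ : J ⊆ polyAlg T) (hJc : IsClosed J) : IsClosed (Fmap J) := by
  have : CompleteSpace J := hJc.completeSpace_coe
  have hanti : AntilipschitzWith C.toNNReal fun S : J => (S : H →L[ℂ] H) (e 0) := by
    refine AntilipschitzWith.of_le_mul_dist fun S S' => ?_
    rw [Subtype.dist_eq, dist_eq_norm, dist_eq_norm, ← sub_apply, Real.coe_toNNReal']
    exact (hC _ (sub_mem (mem_polyAlg_iff.1 (hJ S.2)) (hJ S'.2))).trans
      (by gcongr; exact le_max_left _ _)
  rw [Fmap, Set.image_eq_range]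
  exact hanti.isClosed_range
    ((ContinuousLinearMap.apply ℂ H (e 0)).uniformContinuous.comp uniformContinuous_subtype_val)

lemma Fmap_polyAlg (ha : ∀ n, a n ≠ 0) (hT : ∀ n, T (e n) = a n • e (n + 1))
    (hC : ∀ S ∈ polyAlg T, ‖S‖ ≤ C * ‖S (e 0)‖) : Fmap (polyAlg T) = H1 := by
  let span1 := Submodule.span ℂ {x : H | ∃ n : ℕ, 1 ≤ n ∧ x = e n}
  have he : ∀ n, 1 ≤ n → e n ∈ Fmap (polyAlg T) := by
    intro n hn
    have hw : ∏ i ∈ Finset.range n, a i ≠ 0 := Finset.prod_ne_zero_iff.2 fun i _ => ha i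
    refine ⟨(∏ i ∈ Finset.range n, a i)⁻¹ • T ^ n, ?_, ?_⟩
    · obtain ⟨m, rfl⟩ := Nat.exists_eq_add_of_le' hn
      exact SMulMemClass.smul_mem _ (NonUnitalSubalgebra.le_topologicalClosure _
        (NonUnitalAlgebra.pow_succ_mem_adjoin_singleton T m))
    · dsimp only
      rw [smul_apply, pow_apply_e hT]
      simp [hw]
  apply subset_antisymm
  · have hsub : (fun S : H →L[ℂ] H => S (e 0)) '' NonUnitalAlgebra.adjoin ℂ {T} ⊆ span1 := by
      rintro _ ⟨S, hS, rfl⟩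
      obtain ⟨c, rfl⟩ := NonUnitalAlgebra.exists_finsupp_of_mem_adjoin_singleton hS
      dsimp only
      rw [finsupp_sum_pow_succ_apply_e hT]
      exact Submodule.sum_mem _ fun n _ =>
        Submodule.smul_mem _ _ (Submodule.subset_span ⟨n + 1, by omega, by rw [zero_add]⟩)
    exact (image_closure_subset_closure_image
      (ContinuousLinearMap.apply ℂ H (e 0)).continuous).trans (closure_mono hsub)
  · have hsub : (span1 : Set H) ⊆ Fmap (polyAlg T) := by
      let M := (NonUnitalAlgebra.elemental ℂ T).toSubmodule.map
        (ContinuousLinearMap.apply ℂ H (e 0) : (H →L[ℂ] H) →ₗ[ℂ] H)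
      show (span1 : Set H) ⊆ M
      exact Submodule.span_le.2 fun x ⟨n, hn, hx⟩ => hx ▸ he n hn
    exact closure_minimal hsub (isClosed_Fmap hC subset_rfl isClosed_closure)

lemma IsInvSubspace.apply_mem_of_mem_polyAlg {K : Set H}
    (hK : IsInvSubspace T K) {S : H →L[ℂ] H} (hS : S ∈ polyAlg T) {v : H} (hv : v ∈ K) :
    S v ∈ K := by
  obtain ⟨-, hKc, hK0, hKadd, hKsmul, hKT⟩ := hK
  have hclosed : IsClosed {S : H →L[ℂ] H | ∀ v ∈ K, S v ∈ K} := by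
    simp only [Set.ofPred_forall]
    exact isClosed_biInter fun v _ => hKc.preimage (ContinuousLinearMap.apply ℂ H v).continuous
  refine closure_minimal (fun S hS => ?_) hclosed hS v hv
  induction hS using NonUnitalAlgebra.adjoin_induction with
  | mem x hx => exact (Set.mem_singleton_iff.1 hx) ▸ hKT
  | add x y _ _ hx hy => exact fun v hv => hKadd _ (hx v hv) _ (hy v hv)
  | zero => exact fun _ _ => hK0
  | mul x y _ _ hx hy => exact fun v hv => hx _ (hy v hv)
  | smul c x _ hx => exact fun v hv => hKsmul c _ (hx v hv)

lemma IsClosedIdeal.isInvSubspace_Fmap (hC : ∀ S ∈ polyAlg T, ‖S‖ ≤ C * ‖S (e 0)‖)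
    (hrange : Fmap (polyAlg T) = H1) {J : Set (H →L[ℂ] H)} (hJ : IsClosedIdeal T J) :
    IsInvSubspace T (Fmap J) := by
  obtain ⟨hJA, hJc, hJ0, hJadd, hJsmul, hJmul⟩ := hJ
  refine ⟨hrange ▸ Set.image_mono hJA, isClosed_Fmap hC hJA hJc, ⟨0, hJ0, rfl⟩, ?_, ?_, ?_⟩
  · rintro _ ⟨S, hS, rfl⟩ _ ⟨S', hS', rfl⟩
    exact ⟨S + S', hJadd S hS S' hS', rfl⟩
  · rintro c _ ⟨S, hS, rfl⟩
    exact ⟨c • S, hJsmul c S hS, rfl⟩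
  · rintro _ ⟨S, hS, rfl⟩
    exact ⟨T * S, (hJmul T (NonUnitalAlgebra.elemental.self_mem ℂ T) S hS).1, rfl⟩

lemma subset_of_Fmap_subset_Fmap (hC : ∀ S ∈ polyAlg T, ‖S‖ ≤ C * ‖S (e 0)‖)
    {J₁ J₂ : Set (H →L[ℂ] H)} (hJ₁ : J₁ ⊆ polyAlg T) (hJ₂ : J₂ ⊆ polyAlg T)
    (h : Fmap J₁ ⊆ Fmap J₂) : J₁ ⊆ J₂ := by
  intro S hS
  obtain ⟨S', hS', hSS'⟩ := h ⟨S, hS, rfl⟩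
  exact eq_of_apply_e_zero_eq hC (hJ₂ hS') (hJ₁ hS) hSS' ▸ hS'

lemma IsInvSubspace.exists_isClosedIdeal_Fmap_eq (hrange : Fmap (polyAlg T) = H1)
    {K : Set H} (hK : IsInvSubspace T K) : ∃ J, IsClosedIdeal T J ∧ Fmap J = K := by
  have ⟨hKH1, hKc, hK0, hKadd, hKsmul, _⟩ := hK
  refine ⟨polyAlg T ∩ (fun S : H →L[ℂ] H => S (e 0)) ⁻¹' K, ⟨Set.inter_subset_left,
    isClosed_closure.inter (hKc.preimage (ContinuousLinearMap.apply ℂ H (e 0)).continuous),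
    ⟨zero_mem (NonUnitalAlgebra.elemental ℂ T), hK0⟩, ?_, ?_, ?_⟩, ?_⟩
  · exact fun S hS S' hS' => ⟨add_mem (mem_polyAlg_iff.1 hS.1) hS'.1, hKadd _ hS.2 _ hS'.2⟩
  · exact fun c S hS => ⟨SMulMemClass.smul_mem c (mem_polyAlg_iff.1 hS.1), hKsmul c _ hS.2⟩
  · intro A hA S hS
    have hAS : A * S ∈ polyAlg T ∩ (fun S : H →L[ℂ] H => S (e 0)) ⁻¹' K :=
      ⟨mul_mem (mem_polyAlg_iff.1 hA) hS.1, hK.apply_mem_of_mem_polyAlg hA hS.2⟩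
    exact ⟨hAS, mul_comm_of_mem_polyAlg hA hS.1 ▸ hAS⟩
  · rw [Fmap, Set.image_inter_preimage, ← Fmap, hrange, Set.inter_eq_right.2 hKH1]

end WeightedShift

/-- For a weighted shift with nonzero weights, `|a_0| ≥ |a_1| ≥ ⋯` and `∑ |a_n|² < ∞`:
`F : J ↦ {S e₀ : S ∈ J}` is an inclusion-preserving bijection from the closed two-sided
ideals of `A_T` onto the closed `T`-invariant subspaces of `H₁`. -/
theorem ideal_subspace_lattice_iso (a : ℕ → ℂ) (ha : ∀ n, a n ≠ 0)
    (hdec : ∀ n, ‖a (n + 1)‖ ≤ ‖a n‖)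
    (hsum : Summable fun n => ‖a n‖ ^ 2)
    (T : H →L[ℂ] H) (hT : ∀ n, T (e n) = a n • e (n + 1)) :
    (∀ J : Set (H →L[ℂ] H), IsClosedIdeal T J → IsInvSubspace T (Fmap J)) ∧
    (∀ K : Set H, IsInvSubspace T K →
       ∃ J : Set (H →L[ℂ] H), IsClosedIdeal T J ∧ Fmap J = K) ∧
    (∀ J₁ J₂ : Set (H →L[ℂ] H), IsClosedIdeal T J₁ → IsClosedIdeal T J₂ →
       Fmap J₁ = Fmap J₂ → J₁ = J₂) ∧
    (∀ J₁ J₂ : Set (H →L[ℂ] H), IsClosedIdeal T J₁ → IsClosedIdeal T J₂ →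
       (J₁ ⊆ J₂ ↔ Fmap J₁ ⊆ Fmap J₂)) := by
  obtain ⟨C, hC⟩ := exists_norm_le_mul_norm_apply_e_zero (ha 0) hdec hsum hT
  have hrange : Fmap (polyAlg T) = H1 := Fmap_polyAlg ha hT hC
  have hiff (J₁ J₂ : Set (H →L[ℂ] H)) (h₁ : IsClosedIdeal T J₁) (h₂ : IsClosedIdeal T J₂) :
      J₁ ⊆ J₂ ↔ Fmap J₁ ⊆ Fmap J₂ :=
    ⟨Set.image_mono, subset_of_Fmap_subset_Fmap hC h₁.1 h₂.1⟩
  refine ⟨fun J hJ => hJ.isInvSubspace_Fmap hC hrange,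
    fun K hK => hK.exists_isClosedIdeal_Fmap_eq hrange, fun J₁ J₂ h₁ h₂ h => ?_, hiff⟩
  exact ((hiff J₁ J₂ h₁ h₂).2 h.le).antisymm ((hiff J₂ J₁ h₂ h₁).2 h.ge)
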